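/- Relation between the standard curvature term and Hamilton's quadratic curvature expression: for every algebraic curvature tensor R on T, every orthonormal basis E₁, …, E_m of T, and all X, Y, U, V ∈ T, one has (q(R)⋆R)(X,Y;U,V) = (1/2)·[ R(Ric X, Y; U, V) + R(X, Ric Y; U, V) + R(X, Y; Ric U, V) + R(X, Y; U, Ric V) ] + Q(R)(X,Y;U,V), where Ric also denotes the symmetric endomorphism with g(Ric X, Y) = Ric(X,Y) and Q(R)(X,Y;U,V) := Σ_{μ,ν=1}^m R(X,Y;E_μ,E_ν)·R(U,V;E_μ,E_ν) + 2·Σ_{μ=1}^m [ g(R_{E_μ,X}U, R_{E_μ,Y}V) − g(R_{E_μ,X}V, R_{E_μ,Y}U) ]. -/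

import Mathlib

open scoped BigOperators

variable {T : Type*} [NormedAddCommGroup T] [InnerProductSpace ℝ T] [FiniteDimensional ℝ T]

/-- A map `T → T → T → T → ℝ` that is linear in each of its four arguments. -/
def IsQuadrilinear (R : T → T → T → T → ℝ) : Prop :=
  (∀ Y U V, IsLinearMap ℝ fun X => R X Y U V) ∧
  (∀ X U V, IsLinearMap ℝ fun Y => R X Y U V) ∧
  (∀ X Y V, IsLinearMap ℝ fun U => R X Y U V) ∧
  (∀ X Y U, IsLinearMap ℝ fun V => R X Y U V)

/-- An algebraic curvature tensor on `T`. -/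
def IsAlgCurv (R : T → T → T → T → ℝ) : Prop :=
  IsQuadrilinear R ∧
  (∀ X Y U V : T, R X Y U V = -R Y X U V) ∧
  (∀ X Y U V : T, R X Y U V = -R X Y V U) ∧
  (∀ X Y Z V : T, R X Y Z V + R Y Z X V + R Z X Y V = 0)

/-- The skew-symmetric endomorphism `(X∧Y)U := g(X,U)·Y − g(Y,U)·X`. -/
noncomputable def wedge (X Y : T) : T → T :=
  fun U => (inner ℝ X U : ℝ) • Y - (inner ℝ Y U : ℝ) • X

/-- The Ricci tensor of `R` with respect to the orthonormal basis `E`: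
`Ric(X,Y) := Σ_μ R(E_μ,X;Y,E_μ)`. -/
noncomputable def Ricci {m : ℕ} (E : OrthonormalBasis (Fin m) ℝ T)
    (R : T → T → T → T → ℝ) (X Y : T) : ℝ :=
  ∑ μ : Fin m, R (E μ) X Y (E μ)

/-- The action of an endomorphism `A` of `T` on quadrilinear forms:
`(A⋆P)(X,Y;U,V) := −P(AX,Y;U,V) − P(X,AY;U,V) − P(X,Y;AU,V) − P(X,Y;U,AV)`. -/
noncomputable def starAct (A : T → T) (P : T → T → T → T → ℝ) : T → T → T → T → ℝ :=
  fun X Y U V => -P (A X) Y U V - P X (A Y) U V - P X Y (A U) V - P X Y U (A V)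

/-- The standard curvature term acting on the curvature tensor itself:
`q(R)⋆R := (1/4)·Σ_{μ,ν} (E_μ∧E_ν)⋆(R_{E_μ,E_ν}⋆R)`. -/
noncomputable def qRR {m : ℕ} (E : OrthonormalBasis (Fin m) ℝ T)
    (Rop : T → T → T → T) (R : T → T → T → T → ℝ) : T → T → T → T → ℝ :=
  fun X Y U V =>
    (1 / 4 : ℝ) * ∑ μ : Fin m, ∑ ν : Fin m,
      starAct (wedge (E μ) (E ν)) (starAct (Rop (E μ) (E ν)) R) X Y U V

set_option linter.unusedSectionVars false

section QRRaux

variable {m : ℕ} (E : OrthonormalBasis (Fin m) ℝ T) (R : T → T → T → T → ℝ)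

/-! ### Linearity helpers -/

lemma qrr_r1smul (hq : IsQuadrilinear R) (r : ℝ) (x b c d : T) :
    R (r • x) b c d = r * R x b c d := by
  rw [(hq.1 b c d).map_smul]; exact smul_eq_mul ..

lemma qrr_r2smul (hq : IsQuadrilinear R) (r : ℝ) (a x c d : T) :
    R a (r • x) c d = r * R a x c d := by
  rw [(hq.2.1 a c d).map_smul]; exact smul_eq_mul ..

lemma qrr_r3smul (hq : IsQuadrilinear R) (r : ℝ) (a b x d : T) :
    R a b (r • x) d = r * R a b x d := by
  rw [(hq.2.2.1 a b d).map_smul]; exact smul_eq_mul ..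

lemma qrr_r1sum (hq : IsQuadrilinear R) (f : Fin m → T) (b c d : T) :
    R (∑ i : Fin m, f i) b c d = ∑ i : Fin m, R (f i) b c d :=
  map_sum (IsLinearMap.mk' _ (hq.1 b c d)) f Finset.univ

lemma qrr_r2sum (hq : IsQuadrilinear R) (f : Fin m → T) (a c d : T) :
    R a (∑ i : Fin m, f i) c d = ∑ i : Fin m, R a (f i) c d :=
  map_sum (IsLinearMap.mk' _ (hq.2.1 a c d)) f Finset.univ

lemma qrr_r3sum (hq : IsQuadrilinear R) (f : Fin m → T) (a b d : T) :
    R a b (∑ i : Fin m, f i) d = ∑ i : Fin m, R a b (f i) d :=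
  map_sum (IsLinearMap.mk' _ (hq.2.2.1 a b d)) f Finset.univ

lemma qrr_r1sub (hq : IsQuadrilinear R) (x y b c d : T) :
    R (x - y) b c d = R x b c d - R y b c d := (hq.1 b c d).map_sub x y

lemma qrr_r3sub (hq : IsQuadrilinear R) (a b x y d : T) :
    R a b (x - y) d = R a b x d - R a b y d := (hq.2.2.1 a b d).map_sub x y

/-! ### Symmetries -/

lemma qrr_pairsym (hR : IsAlgCurv R) (a b c d : T) : R a b c d = R c d a b := by
  obtain ⟨-, a1, a2, bi⟩ := hR
  linarith [bi a b c d, bi b c d a, bi c d a b, bi d a b c,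
    a1 c a b d, a2 b c d a, a2 c d b a, a1 d b c a, a2 b d c a,
    a1 d a c b, a2 a d c b, a2 a c d b, a1 d a b c, a2 a b d c]

/-! ### Basis expansions -/

lemma qrr_c1 (hq : IsQuadrilinear R) (x b c d : T) :
    ∑ μ : Fin m, (inner ℝ (E μ) x : ℝ) * R (E μ) b c d = R x b c d := by
  conv_rhs => rw [← E.sum_repr' x]
  rw [qrr_r1sum R hq]
  exact Finset.sum_congr rfl fun μ _ => (qrr_r1smul R hq _ _ b c d).symm

lemma qrr_c2 (hq : IsQuadrilinear R) (x a c d : T) :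
    ∑ μ : Fin m, (inner ℝ (E μ) x : ℝ) * R a (E μ) c d = R a x c d := by
  conv_rhs => rw [← E.sum_repr' x]
  rw [qrr_r2sum R hq]
  exact Finset.sum_congr rfl fun μ _ => (qrr_r2smul R hq _ _ _ c d).symm

variable (Rop : T → T → T → T)

lemma qrr_rop1 (hq : IsQuadrilinear R)
    (hRop : ∀ X Y U V : T, (inner ℝ (Rop X Y U) V : ℝ) = R X Y U V) (x y u b c d : T) :
    R (Rop x y u) b c d = ∑ ρ : Fin m, R x y u (E ρ) * R (E ρ) b c d := by
  conv_lhs => rw [← E.sum_repr' (Rop x y u)]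
  rw [qrr_r1sum R hq]
  refine Finset.sum_congr rfl fun ρ _ => ?_
  rw [qrr_r1smul R hq, real_inner_comm, hRop]

lemma qrr_rop2 (hq : IsQuadrilinear R)
    (hRop : ∀ X Y U V : T, (inner ℝ (Rop X Y U) V : ℝ) = R X Y U V) (x y u a c d : T) :
    R a (Rop x y u) c d = ∑ ρ : Fin m, R x y u (E ρ) * R a (E ρ) c d := by
  conv_lhs => rw [← E.sum_repr' (Rop x y u)]
  rw [qrr_r2sum R hq]
  refine Finset.sum_congr rfl fun ρ _ => ?_
  rw [qrr_r2smul R hq, real_inner_comm, hRop]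

lemma qrr_rop3 (hq : IsQuadrilinear R)
    (hRop : ∀ X Y U V : T, (inner ℝ (Rop X Y U) V : ℝ) = R X Y U V) (x y u a b d : T) :
    R a b (Rop x y u) d = ∑ ρ : Fin m, R x y u (E ρ) * R a b (E ρ) d := by
  conv_lhs => rw [← E.sum_repr' (Rop x y u)]
  rw [qrr_r3sum R hq]
  refine Finset.sum_congr rfl fun ρ _ => ?_
  rw [qrr_r3smul R hq, real_inner_comm, hRop]

lemma qrr_inner_rop
    (hRop : ∀ X Y U V : T, (inner ℝ (Rop X Y U) V : ℝ) = R X Y U V) (a b c x y u : T) :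
    (inner ℝ (Rop a b c) (Rop x y u) : ℝ) = ∑ ρ : Fin m, R a b c (E ρ) * R x y u (E ρ) := by
  conv_lhs => rw [← E.sum_repr' (Rop x y u)]
  rw [inner_sum]
  refine Finset.sum_congr rfl fun ρ _ => ?_
  have h1 : (inner ℝ (E ρ) (Rop x y u) : ℝ) = R x y u (E ρ) := by
    rw [real_inner_comm]; exact hRop x y u (E ρ)
  rw [real_inner_smul_right, h1, hRop]
  ring

lemma qrr_wedge1 (hq : IsQuadrilinear R) (p q x b c d : T) :
    R (wedge p q x) b c d
      = (inner ℝ p x : ℝ) * R q b c d - (inner ℝ q x : ℝ) * R p b c d := by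
  show R ((inner ℝ p x : ℝ) • q - (inner ℝ q x : ℝ) • p) b c d = _
  rw [qrr_r1sub R hq, qrr_r1smul R hq, qrr_r1smul R hq]

lemma qrr_wedge3 (hq : IsQuadrilinear R) (p q x a b d : T) :
    R a b (wedge p q x) d
      = (inner ℝ p x : ℝ) * R a b q d - (inner ℝ q x : ℝ) * R a b p d := by
  show R a b ((inner ℝ p x : ℝ) • q - (inner ℝ q x : ℝ) • p) d = _
  rw [qrr_r3sub R hq, qrr_r3smul R hq, qrr_r3smul R hq]

end QRRaux
section QRRmaster

variable {m : ℕ} (E : OrthonormalBasis (Fin m) ℝ T) (R : T → T → T → T → ℝ)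
variable (Rop : T → T → T → T)

/-- Diagonal term, slot 1. -/
lemma qrr_D1 (hR : IsAlgCurv R)
    (hRop : ∀ X Y U V : T, (inner ℝ (Rop X Y U) V : ℝ) = R X Y U V)
    (RicE : T → T) (hRicE : ∀ X Y : T, (inner ℝ (RicE X) Y : ℝ) = Ricci E R X Y)
    (X Y U V : T) :
    ∑ μ : Fin m, ∑ ν : Fin m, R (Rop (E μ) (E ν) (wedge (E μ) (E ν) X)) Y U V
      = 2 * R (RicE X) Y U V := by
  obtain ⟨hq, a1, a2, -⟩ := hR
  have hRHS : R (RicE X) Y U V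
      = ∑ ρ : Fin m, (∑ μ : Fin m, R (E μ) X (E ρ) (E μ)) * R (E ρ) Y U V := by
    conv_lhs => rw [← E.sum_repr' (RicE X)]
    rw [qrr_r1sum R hq]
    refine Finset.sum_congr rfl fun ρ _ => ?_
    rw [qrr_r1smul R hq]
    congr 1
    rw [real_inner_comm, hRicE, Ricci]
  have hL : ∀ μ ν : Fin m, R (Rop (E μ) (E ν) (wedge (E μ) (E ν) X)) Y U V
      = (∑ ρ : Fin m,
          (inner ℝ (E μ) X : ℝ) * (R (E μ) (E ν) (E ν) (E ρ) * R (E ρ) Y U V))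
        - (∑ ρ : Fin m,
          (inner ℝ (E ν) X : ℝ) * (R (E μ) (E ν) (E μ) (E ρ) * R (E ρ) Y U V)) := by
    intro μ ν
    rw [qrr_rop1 E R Rop hq hRop, ← Finset.sum_sub_distrib]
    refine Finset.sum_congr rfl fun ρ _ => ?_
    rw [qrr_wedge3 R hq]
    ring
  simp only [hL, Finset.sum_sub_distrib]
  have hA : (∑ μ : Fin m, ∑ ν : Fin m, ∑ ρ : Fin m,
        (inner ℝ (E μ) X : ℝ) * (R (E μ) (E ν) (E ν) (E ρ) * R (E ρ) Y U V))
      = ∑ ν : Fin m, ∑ ρ : Fin m, R (E ν) X (E ρ) (E ν) * R (E ρ) Y U V := by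
    rw [Finset.sum_comm]
    refine Finset.sum_congr rfl fun ν _ => ?_
    rw [Finset.sum_comm]
    refine Finset.sum_congr rfl fun ρ _ => ?_
    calc ∑ μ : Fin m, (inner ℝ (E μ) X : ℝ) * (R (E μ) (E ν) (E ν) (E ρ) * R (E ρ) Y U V)
        = (∑ μ : Fin m, (inner ℝ (E μ) X : ℝ) * R (E μ) (E ν) (E ν) (E ρ))
            * R (E ρ) Y U V := by
          rw [Finset.sum_mul]; exact Finset.sum_congr rfl fun μ _ => by ring
      _ = R X (E ν) (E ν) (E ρ) * R (E ρ) Y U V := by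
          rw [qrr_c1 E R hq]
      _ = R (E ν) X (E ρ) (E ν) * R (E ρ) Y U V := by
          rw [a1 X (E ν) (E ν) (E ρ), a2 (E ν) X (E ν) (E ρ)]; ring
  have hB : (∑ μ : Fin m, ∑ ν : Fin m, ∑ ρ : Fin m,
        (inner ℝ (E ν) X : ℝ) * (R (E μ) (E ν) (E μ) (E ρ) * R (E ρ) Y U V))
      = -∑ μ : Fin m, ∑ ρ : Fin m, R (E μ) X (E ρ) (E μ) * R (E ρ) Y U V := by
    rw [← Finset.sum_neg_distrib]
    refine Finset.sum_congr rfl fun μ _ => ?_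
    rw [Finset.sum_comm, ← Finset.sum_neg_distrib]
    refine Finset.sum_congr rfl fun ρ _ => ?_
    calc ∑ ν : Fin m, (inner ℝ (E ν) X : ℝ) * (R (E μ) (E ν) (E μ) (E ρ) * R (E ρ) Y U V)
        = (∑ ν : Fin m, (inner ℝ (E ν) X : ℝ) * R (E μ) (E ν) (E μ) (E ρ))
            * R (E ρ) Y U V := by
          rw [Finset.sum_mul]; exact Finset.sum_congr rfl fun ν _ => by ring
      _ = R (E μ) X (E μ) (E ρ) * R (E ρ) Y U V := by
          rw [qrr_c2 E R hq]
      _ = -(R (E μ) X (E ρ) (E μ) * R (E ρ) Y U V) := by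
          rw [a2 (E μ) X (E μ) (E ρ)]; ring
  rw [hA, hB, hRHS]
  have hS : (∑ ρ : Fin m, (∑ μ : Fin m, R (E μ) X (E ρ) (E μ)) * R (E ρ) Y U V)
      = ∑ μ : Fin m, ∑ ρ : Fin m, R (E μ) X (E ρ) (E μ) * R (E ρ) Y U V :=
    (Finset.sum_congr rfl fun ρ _ => Finset.sum_mul ..).trans Finset.sum_comm
  rw [hS]
  ring

/-- Off-diagonal master: wedge in slot 1, Rop in slot 2. -/
lemma qrr_O12 (hR : IsAlgCurv R)
    (hRop : ∀ X Y U V : T, (inner ℝ (Rop X Y U) V : ℝ) = R X Y U V)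
    (X Y U V : T) :
    ∑ μ : Fin m, ∑ ν : Fin m, R (wedge (E μ) (E ν) X) (Rop (E μ) (E ν) Y) U V
      = ∑ μ : Fin m, ∑ ν : Fin m,
          (-2 : ℝ) * (R (E μ) X Y (E ν) * R (E μ) (E ν) U V) := by
  obtain ⟨hq, a1, a2, -⟩ := hR
  have hL : ∀ μ ν : Fin m, R (wedge (E μ) (E ν) X) (Rop (E μ) (E ν) Y) U V
      = (∑ ρ : Fin m,
          (inner ℝ (E μ) X : ℝ) * (R (E μ) (E ν) Y (E ρ) * R (E ν) (E ρ) U V))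
        - (∑ ρ : Fin m,
          (inner ℝ (E ν) X : ℝ) * (R (E μ) (E ν) Y (E ρ) * R (E μ) (E ρ) U V)) := by
    intro μ ν
    rw [qrr_rop2 E R Rop hq hRop, ← Finset.sum_sub_distrib]
    refine Finset.sum_congr rfl fun ρ _ => ?_
    rw [qrr_wedge1 R hq]
    ring
  simp only [hL, Finset.sum_sub_distrib]
  have hA : (∑ μ : Fin m, ∑ ν : Fin m, ∑ ρ : Fin m,
        (inner ℝ (E μ) X : ℝ) * (R (E μ) (E ν) Y (E ρ) * R (E ν) (E ρ) U V))
      = ∑ ν : Fin m, ∑ ρ : Fin m,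
          (-1 : ℝ) * (R (E ν) X Y (E ρ) * R (E ν) (E ρ) U V) := by
    rw [Finset.sum_comm]
    refine Finset.sum_congr rfl fun ν _ => ?_
    rw [Finset.sum_comm]
    refine Finset.sum_congr rfl fun ρ _ => ?_
    calc ∑ μ : Fin m, (inner ℝ (E μ) X : ℝ) * (R (E μ) (E ν) Y (E ρ) * R (E ν) (E ρ) U V)
        = (∑ μ : Fin m, (inner ℝ (E μ) X : ℝ) * R (E μ) (E ν) Y (E ρ))
            * R (E ν) (E ρ) U V := by
          rw [Finset.sum_mul]; exact Finset.sum_congr rfl fun μ _ => by ring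
      _ = R X (E ν) Y (E ρ) * R (E ν) (E ρ) U V := by rw [qrr_c1 E R hq]
      _ = (-1 : ℝ) * (R (E ν) X Y (E ρ) * R (E ν) (E ρ) U V) := by
          rw [a1 X (E ν) Y (E ρ)]; ring
  have hB : (∑ μ : Fin m, ∑ ν : Fin m, ∑ ρ : Fin m,
        (inner ℝ (E ν) X : ℝ) * (R (E μ) (E ν) Y (E ρ) * R (E μ) (E ρ) U V))
      = ∑ μ : Fin m, ∑ ρ : Fin m, R (E μ) X Y (E ρ) * R (E μ) (E ρ) U V := by
    refine Finset.sum_congr rfl fun μ _ => ?_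
    rw [Finset.sum_comm]
    refine Finset.sum_congr rfl fun ρ _ => ?_
    calc ∑ ν : Fin m, (inner ℝ (E ν) X : ℝ) * (R (E μ) (E ν) Y (E ρ) * R (E μ) (E ρ) U V)
        = (∑ ν : Fin m, (inner ℝ (E ν) X : ℝ) * R (E μ) (E ν) Y (E ρ))
            * R (E μ) (E ρ) U V := by
          rw [Finset.sum_mul]; exact Finset.sum_congr rfl fun ν _ => by ring
      _ = R (E μ) X Y (E ρ) * R (E μ) (E ρ) U V := by rw [qrr_c2 E R hq]
  rw [hA, hB, ← Finset.sum_sub_distrib]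
  refine Finset.sum_congr rfl fun μ _ => ?_
  rw [← Finset.sum_sub_distrib]
  exact Finset.sum_congr rfl fun ν _ => by ring

/-- Off-diagonal master: wedge in slot 1, Rop in slot 3. -/
lemma qrr_O13 (hR : IsAlgCurv R)
    (hRop : ∀ X Y U V : T, (inner ℝ (Rop X Y U) V : ℝ) = R X Y U V)
    (X Y U V : T) :
    ∑ μ : Fin m, ∑ ν : Fin m, R (wedge (E μ) (E ν) X) Y (Rop (E μ) (E ν) U) V
      = ∑ μ : Fin m, ∑ ν : Fin m,
          (-2 : ℝ) * (R (E μ) X U (E ν) * R (E μ) Y (E ν) V) := by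
  obtain ⟨hq, a1, a2, -⟩ := hR
  have hL : ∀ μ ν : Fin m, R (wedge (E μ) (E ν) X) Y (Rop (E μ) (E ν) U) V
      = (∑ ρ : Fin m,
          (inner ℝ (E μ) X : ℝ) * (R (E μ) (E ν) U (E ρ) * R (E ν) Y (E ρ) V))
        - (∑ ρ : Fin m,
          (inner ℝ (E ν) X : ℝ) * (R (E μ) (E ν) U (E ρ) * R (E μ) Y (E ρ) V)) := by
    intro μ ν
    rw [qrr_rop3 E R Rop hq hRop, ← Finset.sum_sub_distrib]
    refine Finset.sum_congr rfl fun ρ _ => ?_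
    rw [qrr_wedge1 R hq]
    ring
  simp only [hL, Finset.sum_sub_distrib]
  have hA : (∑ μ : Fin m, ∑ ν : Fin m, ∑ ρ : Fin m,
        (inner ℝ (E μ) X : ℝ) * (R (E μ) (E ν) U (E ρ) * R (E ν) Y (E ρ) V))
      = ∑ ν : Fin m, ∑ ρ : Fin m,
          (-1 : ℝ) * (R (E ν) X U (E ρ) * R (E ν) Y (E ρ) V) := by
    rw [Finset.sum_comm]
    refine Finset.sum_congr rfl fun ν _ => ?_
    rw [Finset.sum_comm]
    refine Finset.sum_congr rfl fun ρ _ => ?_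
    calc ∑ μ : Fin m, (inner ℝ (E μ) X : ℝ) * (R (E μ) (E ν) U (E ρ) * R (E ν) Y (E ρ) V)
        = (∑ μ : Fin m, (inner ℝ (E μ) X : ℝ) * R (E μ) (E ν) U (E ρ))
            * R (E ν) Y (E ρ) V := by
          rw [Finset.sum_mul]; exact Finset.sum_congr rfl fun μ _ => by ring
      _ = R X (E ν) U (E ρ) * R (E ν) Y (E ρ) V := by rw [qrr_c1 E R hq]
      _ = (-1 : ℝ) * (R (E ν) X U (E ρ) * R (E ν) Y (E ρ) V) := by
          rw [a1 X (E ν) U (E ρ)]; ring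
  have hB : (∑ μ : Fin m, ∑ ν : Fin m, ∑ ρ : Fin m,
        (inner ℝ (E ν) X : ℝ) * (R (E μ) (E ν) U (E ρ) * R (E μ) Y (E ρ) V))
      = ∑ μ : Fin m, ∑ ρ : Fin m, R (E μ) X U (E ρ) * R (E μ) Y (E ρ) V := by
    refine Finset.sum_congr rfl fun μ _ => ?_
    rw [Finset.sum_comm]
    refine Finset.sum_congr rfl fun ρ _ => ?_
    calc ∑ ν : Fin m, (inner ℝ (E ν) X : ℝ) * (R (E μ) (E ν) U (E ρ) * R (E μ) Y (E ρ) V)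
        = (∑ ν : Fin m, (inner ℝ (E ν) X : ℝ) * R (E μ) (E ν) U (E ρ))
            * R (E μ) Y (E ρ) V := by
          rw [Finset.sum_mul]; exact Finset.sum_congr rfl fun ν _ => by ring
      _ = R (E μ) X U (E ρ) * R (E μ) Y (E ρ) V := by rw [qrr_c2 E R hq]
  rw [hA, hB, ← Finset.sum_sub_distrib]
  refine Finset.sum_congr rfl fun μ _ => ?_
  rw [← Finset.sum_sub_distrib]
  exact Finset.sum_congr rfl fun ν _ => by ring

end QRRmaster
section QRRcor

variable {m : ℕ} (E : OrthonormalBasis (Fin m) ℝ T) (R : T → T → T → T → ℝ)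
variable (Rop : T → T → T → T)
variable (hR : IsAlgCurv R)
variable (hRop : ∀ X Y U V : T, (inner ℝ (Rop X Y U) V : ℝ) = R X Y U V)
include hR hRop

/-- (1,2)+(2,1) pair: the `R·R` contraction term. -/
lemma qrr_c12pair (X Y U V : T) :
    (∑ μ : Fin m, ∑ ν : Fin m, R (wedge (E μ) (E ν) X) (Rop (E μ) (E ν) Y) U V)
      + (∑ μ : Fin m, ∑ ν : Fin m, R (Rop (E μ) (E ν) X) (wedge (E μ) (E ν) Y) U V)
    = 2 * ∑ μ : Fin m, ∑ ν : Fin m, R X Y (E μ) (E ν) * R U V (E μ) (E ν) := by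
  have a1 := hR.2.1
  have bi := hR.2.2.2
  have ps := qrr_pairsym R hR
  have h2 : (∑ μ : Fin m, ∑ ν : Fin m, R (Rop (E μ) (E ν) X) (wedge (E μ) (E ν) Y) U V)
      = ∑ μ : Fin m, ∑ ν : Fin m,
          (2 : ℝ) * (R (E μ) Y X (E ν) * R (E μ) (E ν) U V) := by
    calc (∑ μ : Fin m, ∑ ν : Fin m, R (Rop (E μ) (E ν) X) (wedge (E μ) (E ν) Y) U V)
        = ∑ μ : Fin m, ∑ ν : Fin m,
            -(R (wedge (E μ) (E ν) Y) (Rop (E μ) (E ν) X) U V) := by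
          exact Finset.sum_congr rfl fun μ _ => Finset.sum_congr rfl fun ν _ => by
            rw [a1 (Rop (E μ) (E ν) X) (wedge (E μ) (E ν) Y) U V]
      _ = -(∑ μ : Fin m, ∑ ν : Fin m,
            R (wedge (E μ) (E ν) Y) (Rop (E μ) (E ν) X) U V) := by
          simp only [Finset.sum_neg_distrib]
      _ = -(∑ μ : Fin m, ∑ ν : Fin m,
            (-2 : ℝ) * (R (E μ) Y X (E ν) * R (E μ) (E ν) U V)) := by
          rw [qrr_O12 E R Rop hR hRop Y X U V]
      _ = ∑ μ : Fin m, ∑ ν : Fin m,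
            (2 : ℝ) * (R (E μ) Y X (E ν) * R (E μ) (E ν) U V) := by
          simp only [← Finset.sum_neg_distrib]
          exact Finset.sum_congr rfl fun μ _ => Finset.sum_congr rfl fun ν _ => by ring
  rw [qrr_O12 E R Rop hR hRop X Y U V, h2, ← Finset.sum_add_distrib, Finset.mul_sum]
  refine Finset.sum_congr rfl fun μ _ => ?_
  rw [← Finset.sum_add_distrib, Finset.mul_sum]
  refine Finset.sum_congr rfl fun ν _ => ?_
  have hb : R (E μ) X Y (E ν) = -(R X Y (E μ) (E ν)) + R (E μ) Y X (E ν) := by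
    linarith [bi (E μ) X Y (E ν), a1 Y (E μ) X (E ν)]
  rw [hb, ps (E μ) (E ν) U V]
  ring

/-- (3,4)+(4,3) pair: the `R·R` contraction term. -/
lemma qrr_c34pair (X Y U V : T) :
    (∑ μ : Fin m, ∑ ν : Fin m, R X Y (wedge (E μ) (E ν) U) (Rop (E μ) (E ν) V))
      + (∑ μ : Fin m, ∑ ν : Fin m, R X Y (Rop (E μ) (E ν) U) (wedge (E μ) (E ν) V))
    = 2 * ∑ μ : Fin m, ∑ ν : Fin m, R X Y (E μ) (E ν) * R U V (E μ) (E ν) := by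
  have a1 := hR.2.1
  have bi := hR.2.2.2
  have ps := qrr_pairsym R hR
  have h1 : (∑ μ : Fin m, ∑ ν : Fin m, R X Y (wedge (E μ) (E ν) U) (Rop (E μ) (E ν) V))
      = ∑ μ : Fin m, ∑ ν : Fin m,
          (-2 : ℝ) * (R (E μ) U V (E ν) * R (E μ) (E ν) X Y) := by
    calc (∑ μ : Fin m, ∑ ν : Fin m, R X Y (wedge (E μ) (E ν) U) (Rop (E μ) (E ν) V))
        = ∑ μ : Fin m, ∑ ν : Fin m,
            R (wedge (E μ) (E ν) U) (Rop (E μ) (E ν) V) X Y := by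
          exact Finset.sum_congr rfl fun μ _ => Finset.sum_congr rfl fun ν _ =>
            ps X Y (wedge (E μ) (E ν) U) (Rop (E μ) (E ν) V)
      _ = _ := qrr_O12 E R Rop hR hRop U V X Y
  have h2 : (∑ μ : Fin m, ∑ ν : Fin m, R X Y (Rop (E μ) (E ν) U) (wedge (E μ) (E ν) V))
      = ∑ μ : Fin m, ∑ ν : Fin m,
          (2 : ℝ) * (R (E μ) V U (E ν) * R (E μ) (E ν) X Y) := by
    calc (∑ μ : Fin m, ∑ ν : Fin m, R X Y (Rop (E μ) (E ν) U) (wedge (E μ) (E ν) V))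
        = ∑ μ : Fin m, ∑ ν : Fin m,
            -(R (wedge (E μ) (E ν) V) (Rop (E μ) (E ν) U) X Y) := by
          refine Finset.sum_congr rfl fun μ _ => Finset.sum_congr rfl fun ν _ => ?_
          have e1 := ps X Y (Rop (E μ) (E ν) U) (wedge (E μ) (E ν) V)
          have e2 := a1 (Rop (E μ) (E ν) U) (wedge (E μ) (E ν) V) X Y
          linarith
      _ = -(∑ μ : Fin m, ∑ ν : Fin m,
            R (wedge (E μ) (E ν) V) (Rop (E μ) (E ν) U) X Y) := by
          simp only [Finset.sum_neg_distrib]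
      _ = -(∑ μ : Fin m, ∑ ν : Fin m,
            (-2 : ℝ) * (R (E μ) V U (E ν) * R (E μ) (E ν) X Y)) := by
          rw [qrr_O12 E R Rop hR hRop V U X Y]
      _ = ∑ μ : Fin m, ∑ ν : Fin m,
            (2 : ℝ) * (R (E μ) V U (E ν) * R (E μ) (E ν) X Y) := by
          simp only [← Finset.sum_neg_distrib]
          exact Finset.sum_congr rfl fun μ _ => Finset.sum_congr rfl fun ν _ => by ring
  rw [h1, h2, ← Finset.sum_add_distrib, Finset.mul_sum]
  refine Finset.sum_congr rfl fun μ _ => ?_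
  rw [← Finset.sum_add_distrib, Finset.mul_sum]
  refine Finset.sum_congr rfl fun ν _ => ?_
  have hb : R (E μ) U V (E ν) = -(R U V (E μ) (E ν)) + R (E μ) V U (E ν) := by
    linarith [bi (E μ) U V (E ν), a1 V (E μ) U (E ν)]
  rw [hb, ps (E μ) (E ν) X Y]
  ring

end QRRcor
section QRRcor2

variable {m : ℕ} (E : OrthonormalBasis (Fin m) ℝ T) (R : T → T → T → T → ℝ)
variable (Rop : T → T → T → T)
variable (hR : IsAlgCurv R)
variable (hRop : ∀ X Y U V : T, (inner ℝ (Rop X Y U) V : ℝ) = R X Y U V)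
include hR hRop

lemma qrr_c13 (X Y U V : T) :
    (∑ μ : Fin m, ∑ ν : Fin m, R (wedge (E μ) (E ν) X) Y (Rop (E μ) (E ν) U) V)
    = 2 * ∑ μ : Fin m, ∑ ν : Fin m, R (E μ) X U (E ν) * R (E μ) Y V (E ν) := by
  have a2 := hR.2.2.1
  rw [qrr_O13 E R Rop hR hRop X Y U V, Finset.mul_sum]
  refine Finset.sum_congr rfl fun μ _ => ?_
  rw [Finset.mul_sum]
  refine Finset.sum_congr rfl fun ν _ => ?_
  rw [a2 (E μ) Y (E ν) V]
  ring

lemma qrr_c31 (X Y U V : T) :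
    (∑ μ : Fin m, ∑ ν : Fin m, R (Rop (E μ) (E ν) X) Y (wedge (E μ) (E ν) U) V)
    = 2 * ∑ μ : Fin m, ∑ ν : Fin m, R (E μ) X U (E ν) * R (E μ) Y V (E ν) := by
  have a1 := hR.2.1
  have a2 := hR.2.2.1
  have ps := qrr_pairsym R hR
  calc (∑ μ : Fin m, ∑ ν : Fin m, R (Rop (E μ) (E ν) X) Y (wedge (E μ) (E ν) U) V)
      = ∑ μ : Fin m, ∑ ν : Fin m,
          R (wedge (E μ) (E ν) U) V (Rop (E μ) (E ν) X) Y :=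
        Finset.sum_congr rfl fun μ _ => Finset.sum_congr rfl fun ν _ =>
          ps (Rop (E μ) (E ν) X) Y (wedge (E μ) (E ν) U) V
    _ = ∑ μ : Fin m, ∑ ν : Fin m,
          (-2 : ℝ) * (R (E μ) U X (E ν) * R (E μ) V (E ν) Y) :=
        qrr_O13 E R Rop hR hRop U V X Y
    _ = ∑ μ : Fin m, ∑ ν : Fin m,
          (2 : ℝ) * (R (E ν) X U (E μ) * R (E ν) Y V (E μ)) := by
        refine Finset.sum_congr rfl fun μ _ => Finset.sum_congr rfl fun ν _ => ?_
        have h1 : R (E μ) U X (E ν) = R (E ν) X U (E μ) := by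
          linarith [ps (E μ) U X (E ν), a1 X (E ν) (E μ) U, a2 (E ν) X (E μ) U]
        have h2 : R (E μ) V (E ν) Y = -(R (E ν) Y V (E μ)) := by
          linarith [ps (E μ) V (E ν) Y, a2 (E ν) Y (E μ) V]
        rw [h1, h2]; ring
    _ = ∑ ν : Fin m, ∑ μ : Fin m,
          (2 : ℝ) * (R (E ν) X U (E μ) * R (E ν) Y V (E μ)) := Finset.sum_comm
    _ = 2 * ∑ μ : Fin m, ∑ ν : Fin m, R (E μ) X U (E ν) * R (E μ) Y V (E ν) := by
        simp only [Finset.mul_sum]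

lemma qrr_c24 (X Y U V : T) :
    (∑ μ : Fin m, ∑ ν : Fin m, R X (wedge (E μ) (E ν) Y) U (Rop (E μ) (E ν) V))
    = 2 * ∑ μ : Fin m, ∑ ν : Fin m, R (E μ) X U (E ν) * R (E μ) Y V (E ν) := by
  have a1 := hR.2.1
  have a2 := hR.2.2.1
  calc (∑ μ : Fin m, ∑ ν : Fin m, R X (wedge (E μ) (E ν) Y) U (Rop (E μ) (E ν) V))
      = ∑ μ : Fin m, ∑ ν : Fin m,
          R (wedge (E μ) (E ν) Y) X (Rop (E μ) (E ν) V) U := by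
        refine Finset.sum_congr rfl fun μ _ => Finset.sum_congr rfl fun ν _ => ?_
        have e1 := a1 X (wedge (E μ) (E ν) Y) U (Rop (E μ) (E ν) V)
        have e2 := a2 (wedge (E μ) (E ν) Y) X U (Rop (E μ) (E ν) V)
        linarith
    _ = ∑ μ : Fin m, ∑ ν : Fin m,
          (-2 : ℝ) * (R (E μ) Y V (E ν) * R (E μ) X (E ν) U) :=
        qrr_O13 E R Rop hR hRop Y X V U
    _ = 2 * ∑ μ : Fin m, ∑ ν : Fin m, R (E μ) X U (E ν) * R (E μ) Y V (E ν) := by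
        rw [Finset.mul_sum]
        refine Finset.sum_congr rfl fun μ _ => ?_
        rw [Finset.mul_sum]
        refine Finset.sum_congr rfl fun ν _ => ?_
        rw [a2 (E μ) X (E ν) U]; ring

lemma qrr_c42 (X Y U V : T) :
    (∑ μ : Fin m, ∑ ν : Fin m, R X (Rop (E μ) (E ν) Y) U (wedge (E μ) (E ν) V))
    = 2 * ∑ μ : Fin m, ∑ ν : Fin m, R (E μ) X U (E ν) * R (E μ) Y V (E ν) := by
  have a1 := hR.2.1
  have a2 := hR.2.2.1
  have ps := qrr_pairsym R hR
  calc (∑ μ : Fin m, ∑ ν : Fin m, R X (Rop (E μ) (E ν) Y) U (wedge (E μ) (E ν) V))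
      = ∑ μ : Fin m, ∑ ν : Fin m,
          R (wedge (E μ) (E ν) V) U (Rop (E μ) (E ν) Y) X := by
        refine Finset.sum_congr rfl fun μ _ => Finset.sum_congr rfl fun ν _ => ?_
        have e1 := ps X (Rop (E μ) (E ν) Y) U (wedge (E μ) (E ν) V)
        have e2 := a1 U (wedge (E μ) (E ν) V) X (Rop (E μ) (E ν) Y)
        have e3 := a2 (wedge (E μ) (E ν) V) U X (Rop (E μ) (E ν) Y)
        linarith
    _ = ∑ μ : Fin m, ∑ ν : Fin m,
          (-2 : ℝ) * (R (E μ) V Y (E ν) * R (E μ) U (E ν) X) :=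
        qrr_O13 E R Rop hR hRop V U Y X
    _ = ∑ μ : Fin m, ∑ ν : Fin m,
          (2 : ℝ) * (R (E ν) X U (E μ) * R (E ν) Y V (E μ)) := by
        refine Finset.sum_congr rfl fun μ _ => Finset.sum_congr rfl fun ν _ => ?_
        have h1 : R (E μ) V Y (E ν) = R (E ν) Y V (E μ) := by
          linarith [ps (E μ) V Y (E ν), a1 Y (E ν) (E μ) V, a2 (E ν) Y (E μ) V]
        have h2 : R (E μ) U (E ν) X = -(R (E ν) X U (E μ)) := by
          linarith [ps (E μ) U (E ν) X, a2 (E ν) X (E μ) U]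
        rw [h1, h2]; ring
    _ = ∑ ν : Fin m, ∑ μ : Fin m,
          (2 : ℝ) * (R (E ν) X U (E μ) * R (E ν) Y V (E μ)) := Finset.sum_comm
    _ = 2 * ∑ μ : Fin m, ∑ ν : Fin m, R (E μ) X U (E ν) * R (E μ) Y V (E ν) := by
        simp only [Finset.mul_sum]

lemma qrr_c14 (X Y U V : T) :
    (∑ μ : Fin m, ∑ ν : Fin m, R (wedge (E μ) (E ν) X) Y U (Rop (E μ) (E ν) V))
    = (-2 : ℝ) * ∑ μ : Fin m, ∑ ν : Fin m, R (E μ) X V (E ν) * R (E μ) Y U (E ν) := by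
  have a2 := hR.2.2.1
  calc (∑ μ : Fin m, ∑ ν : Fin m, R (wedge (E μ) (E ν) X) Y U (Rop (E μ) (E ν) V))
      = ∑ μ : Fin m, ∑ ν : Fin m,
          -(R (wedge (E μ) (E ν) X) Y (Rop (E μ) (E ν) V) U) :=
        Finset.sum_congr rfl fun μ _ => Finset.sum_congr rfl fun ν _ =>
          a2 (wedge (E μ) (E ν) X) Y U (Rop (E μ) (E ν) V)
    _ = -(∑ μ : Fin m, ∑ ν : Fin m,
          R (wedge (E μ) (E ν) X) Y (Rop (E μ) (E ν) V) U) := by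
        simp only [Finset.sum_neg_distrib]
    _ = -(∑ μ : Fin m, ∑ ν : Fin m,
          (-2 : ℝ) * (R (E μ) X V (E ν) * R (E μ) Y (E ν) U)) := by
        rw [qrr_O13 E R Rop hR hRop X Y V U]
    _ = (-2 : ℝ) * ∑ μ : Fin m, ∑ ν : Fin m,
          R (E μ) X V (E ν) * R (E μ) Y U (E ν) := by
        rw [Finset.mul_sum, ← Finset.sum_neg_distrib]
        refine Finset.sum_congr rfl fun μ _ => ?_
        rw [Finset.mul_sum, ← Finset.sum_neg_distrib]
        refine Finset.sum_congr rfl fun ν _ => ?_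
        rw [a2 (E μ) Y (E ν) U]; ring

lemma qrr_c23 (X Y U V : T) :
    (∑ μ : Fin m, ∑ ν : Fin m, R X (wedge (E μ) (E ν) Y) (Rop (E μ) (E ν) U) V)
    = (-2 : ℝ) * ∑ μ : Fin m, ∑ ν : Fin m, R (E μ) X V (E ν) * R (E μ) Y U (E ν) := by
  have a1 := hR.2.1
  have a2 := hR.2.2.1
  calc (∑ μ : Fin m, ∑ ν : Fin m, R X (wedge (E μ) (E ν) Y) (Rop (E μ) (E ν) U) V)
      = ∑ μ : Fin m, ∑ ν : Fin m,
          -(R (wedge (E μ) (E ν) Y) X (Rop (E μ) (E ν) U) V) :=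
        Finset.sum_congr rfl fun μ _ => Finset.sum_congr rfl fun ν _ =>
          a1 X (wedge (E μ) (E ν) Y) (Rop (E μ) (E ν) U) V
    _ = -(∑ μ : Fin m, ∑ ν : Fin m,
          R (wedge (E μ) (E ν) Y) X (Rop (E μ) (E ν) U) V) := by
        simp only [Finset.sum_neg_distrib]
    _ = -(∑ μ : Fin m, ∑ ν : Fin m,
          (-2 : ℝ) * (R (E μ) Y U (E ν) * R (E μ) X (E ν) V)) := by
        rw [qrr_O13 E R Rop hR hRop Y X U V]
    _ = (-2 : ℝ) * ∑ μ : Fin m, ∑ ν : Fin m,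
          R (E μ) X V (E ν) * R (E μ) Y U (E ν) := by
        rw [Finset.mul_sum, ← Finset.sum_neg_distrib]
        refine Finset.sum_congr rfl fun μ _ => ?_
        rw [Finset.mul_sum, ← Finset.sum_neg_distrib]
        refine Finset.sum_congr rfl fun ν _ => ?_
        rw [a2 (E μ) X (E ν) V]; ring

lemma qrr_c41 (X Y U V : T) :
    (∑ μ : Fin m, ∑ ν : Fin m, R (Rop (E μ) (E ν) X) Y U (wedge (E μ) (E ν) V))
    = (-2 : ℝ) * ∑ μ : Fin m, ∑ ν : Fin m, R (E μ) X V (E ν) * R (E μ) Y U (E ν) := by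
  have a1 := hR.2.1
  have a2 := hR.2.2.1
  have ps := qrr_pairsym R hR
  calc (∑ μ : Fin m, ∑ ν : Fin m, R (Rop (E μ) (E ν) X) Y U (wedge (E μ) (E ν) V))
      = ∑ μ : Fin m, ∑ ν : Fin m,
          -(R (wedge (E μ) (E ν) V) U (Rop (E μ) (E ν) X) Y) := by
        refine Finset.sum_congr rfl fun μ _ => Finset.sum_congr rfl fun ν _ => ?_
        have e1 := ps (Rop (E μ) (E ν) X) Y U (wedge (E μ) (E ν) V)
        have e2 := a1 U (wedge (E μ) (E ν) V) (Rop (E μ) (E ν) X) Y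
        linarith
    _ = -(∑ μ : Fin m, ∑ ν : Fin m,
          R (wedge (E μ) (E ν) V) U (Rop (E μ) (E ν) X) Y) := by
        simp only [Finset.sum_neg_distrib]
    _ = -(∑ μ : Fin m, ∑ ν : Fin m,
          (-2 : ℝ) * (R (E μ) V X (E ν) * R (E μ) U (E ν) Y)) := by
        rw [qrr_O13 E R Rop hR hRop V U X Y]
    _ = ∑ μ : Fin m, ∑ ν : Fin m,
          (-2 : ℝ) * (R (E ν) X V (E μ) * R (E ν) Y U (E μ)) := by
        rw [← Finset.sum_neg_distrib]
        refine Finset.sum_congr rfl fun μ _ => ?_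
        rw [← Finset.sum_neg_distrib]
        refine Finset.sum_congr rfl fun ν _ => ?_
        have h1 : R (E μ) V X (E ν) = R (E ν) X V (E μ) := by
          linarith [ps (E μ) V X (E ν), a1 X (E ν) (E μ) V, a2 (E ν) X (E μ) V]
        have h2 : R (E μ) U (E ν) Y = -(R (E ν) Y U (E μ)) := by
          linarith [ps (E μ) U (E ν) Y, a2 (E ν) Y (E μ) U]
        rw [h1, h2]; ring
    _ = ∑ ν : Fin m, ∑ μ : Fin m,
          (-2 : ℝ) * (R (E ν) X V (E μ) * R (E ν) Y U (E μ)) := Finset.sum_comm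
    _ = (-2 : ℝ) * ∑ μ : Fin m, ∑ ν : Fin m,
          R (E μ) X V (E ν) * R (E μ) Y U (E ν) := by
        simp only [Finset.mul_sum]

lemma qrr_c32 (X Y U V : T) :
    (∑ μ : Fin m, ∑ ν : Fin m, R X (Rop (E μ) (E ν) Y) (wedge (E μ) (E ν) U) V)
    = (-2 : ℝ) * ∑ μ : Fin m, ∑ ν : Fin m, R (E μ) X V (E ν) * R (E μ) Y U (E ν) := by
  have a1 := hR.2.1
  have a2 := hR.2.2.1
  have ps := qrr_pairsym R hR
  calc (∑ μ : Fin m, ∑ ν : Fin m, R X (Rop (E μ) (E ν) Y) (wedge (E μ) (E ν) U) V)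
      = ∑ μ : Fin m, ∑ ν : Fin m,
          -(R (wedge (E μ) (E ν) U) V (Rop (E μ) (E ν) Y) X) := by
        refine Finset.sum_congr rfl fun μ _ => Finset.sum_congr rfl fun ν _ => ?_
        have e1 := ps X (Rop (E μ) (E ν) Y) (wedge (E μ) (E ν) U) V
        have e2 := a2 (wedge (E μ) (E ν) U) V X (Rop (E μ) (E ν) Y)
        linarith
    _ = -(∑ μ : Fin m, ∑ ν : Fin m,
          R (wedge (E μ) (E ν) U) V (Rop (E μ) (E ν) Y) X) := by
        simp only [Finset.sum_neg_distrib]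
    _ = -(∑ μ : Fin m, ∑ ν : Fin m,
          (-2 : ℝ) * (R (E μ) U Y (E ν) * R (E μ) V (E ν) X)) := by
        rw [qrr_O13 E R Rop hR hRop U V Y X]
    _ = ∑ μ : Fin m, ∑ ν : Fin m,
          (-2 : ℝ) * (R (E ν) X V (E μ) * R (E ν) Y U (E μ)) := by
        rw [← Finset.sum_neg_distrib]
        refine Finset.sum_congr rfl fun μ _ => ?_
        rw [← Finset.sum_neg_distrib]
        refine Finset.sum_congr rfl fun ν _ => ?_
        have h1 : R (E μ) U Y (E ν) = R (E ν) Y U (E μ) := by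
          linarith [ps (E μ) U Y (E ν), a1 Y (E ν) (E μ) U, a2 (E ν) Y (E μ) U]
        have h2 : R (E μ) V (E ν) X = -(R (E ν) X V (E μ)) := by
          linarith [ps (E μ) V (E ν) X, a2 (E ν) X (E μ) V]
        rw [h1, h2]; ring
    _ = ∑ ν : Fin m, ∑ μ : Fin m,
          (-2 : ℝ) * (R (E ν) X V (E μ) * R (E ν) Y U (E μ)) := Finset.sum_comm
    _ = (-2 : ℝ) * ∑ μ : Fin m, ∑ ν : Fin m,
          R (E μ) X V (E ν) * R (E μ) Y U (E ν) := by
        simp only [Finset.mul_sum]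

end QRRcor2
section QRRdiag

variable {m : ℕ} (E : OrthonormalBasis (Fin m) ℝ T) (R : T → T → T → T → ℝ)
variable (Rop : T → T → T → T)
variable (hR : IsAlgCurv R)
variable (hRop : ∀ X Y U V : T, (inner ℝ (Rop X Y U) V : ℝ) = R X Y U V)
variable (RicE : T → T)
variable (hRicE : ∀ X Y : T, (inner ℝ (RicE X) Y : ℝ) = Ricci E R X Y)
include hR hRop hRicE

lemma qrr_D2 (X Y U V : T) :
    ∑ μ : Fin m, ∑ ν : Fin m, R X (Rop (E μ) (E ν) (wedge (E μ) (E ν) Y)) U V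
      = 2 * R X (RicE Y) U V := by
  have a1 := hR.2.1
  calc (∑ μ : Fin m, ∑ ν : Fin m, R X (Rop (E μ) (E ν) (wedge (E μ) (E ν) Y)) U V)
      = ∑ μ : Fin m, ∑ ν : Fin m,
          -(R (Rop (E μ) (E ν) (wedge (E μ) (E ν) Y)) X U V) :=
        Finset.sum_congr rfl fun μ _ => Finset.sum_congr rfl fun ν _ =>
          a1 X (Rop (E μ) (E ν) (wedge (E μ) (E ν) Y)) U V
    _ = -(∑ μ : Fin m, ∑ ν : Fin m,
          R (Rop (E μ) (E ν) (wedge (E μ) (E ν) Y)) X U V) := by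
        simp only [Finset.sum_neg_distrib]
    _ = -(2 * R (RicE Y) X U V) := by
        rw [qrr_D1 E R Rop hR hRop RicE hRicE Y X U V]
    _ = 2 * R X (RicE Y) U V := by
        have := a1 (RicE Y) X U V; linarith

lemma qrr_D3 (X Y U V : T) :
    ∑ μ : Fin m, ∑ ν : Fin m, R X Y (Rop (E μ) (E ν) (wedge (E μ) (E ν) U)) V
      = 2 * R X Y (RicE U) V := by
  have ps := qrr_pairsym R hR
  calc (∑ μ : Fin m, ∑ ν : Fin m, R X Y (Rop (E μ) (E ν) (wedge (E μ) (E ν) U)) V)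
      = ∑ μ : Fin m, ∑ ν : Fin m,
          R (Rop (E μ) (E ν) (wedge (E μ) (E ν) U)) V X Y :=
        Finset.sum_congr rfl fun μ _ => Finset.sum_congr rfl fun ν _ =>
          ps X Y (Rop (E μ) (E ν) (wedge (E μ) (E ν) U)) V
    _ = 2 * R (RicE U) V X Y := qrr_D1 E R Rop hR hRop RicE hRicE U V X Y
    _ = 2 * R X Y (RicE U) V := by rw [ps (RicE U) V X Y]

lemma qrr_D4 (X Y U V : T) :
    ∑ μ : Fin m, ∑ ν : Fin m, R X Y U (Rop (E μ) (E ν) (wedge (E μ) (E ν) V))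
      = 2 * R X Y U (RicE V) := by
  have a1 := hR.2.1
  have a2 := hR.2.2.1
  have ps := qrr_pairsym R hR
  calc (∑ μ : Fin m, ∑ ν : Fin m, R X Y U (Rop (E μ) (E ν) (wedge (E μ) (E ν) V)))
      = ∑ μ : Fin m, ∑ ν : Fin m,
          -(R (Rop (E μ) (E ν) (wedge (E μ) (E ν) V)) U X Y) := by
        refine Finset.sum_congr rfl fun μ _ => Finset.sum_congr rfl fun ν _ => ?_
        have e1 := ps X Y U (Rop (E μ) (E ν) (wedge (E μ) (E ν) V))
        have e2 := a1 U (Rop (E μ) (E ν) (wedge (E μ) (E ν) V)) X Y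
        linarith
    _ = -(∑ μ : Fin m, ∑ ν : Fin m,
          R (Rop (E μ) (E ν) (wedge (E μ) (E ν) V)) U X Y) := by
        simp only [Finset.sum_neg_distrib]
    _ = -(2 * R (RicE V) U X Y) := by
        rw [qrr_D1 E R Rop hR hRop RicE hRicE V U X Y]
    _ = 2 * R X Y U (RicE V) := by
        have e1 := ps (RicE V) U X Y
        have e2 := a2 X Y (RicE V) U
        linarith

end QRRdiag
/-- `q(R)⋆R = (1/2)·Der_Ric R + Q(R)` with Hamilton's quadratic curvature
expression `Q(R)`. -/
theorem qRR_eq_derRic_add_hamilton {m : ℕ} (E : OrthonormalBasis (Fin m) ℝ T)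
    (R : T → T → T → T → ℝ) (hR : IsAlgCurv R)
    (Rop : T → T → T → T)
    (hRop : ∀ X Y U V : T, (inner ℝ (Rop X Y U) V : ℝ) = R X Y U V)
    (RicE : T → T)
    (hRicE : ∀ X Y : T, (inner ℝ (RicE X) Y : ℝ) = Ricci E R X Y) :
    ∀ X Y U V : T,
      qRR E Rop R X Y U V =
        (1 / 2 : ℝ) * (R (RicE X) Y U V + R X (RicE Y) U V
            + R X Y (RicE U) V + R X Y U (RicE V))
          + ((∑ μ : Fin m, ∑ ν : Fin m, R X Y (E μ) (E ν) * R U V (E μ) (E ν))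
            + 2 * ∑ μ : Fin m,
                ((inner ℝ (Rop (E μ) X U) (Rop (E μ) Y V) : ℝ)
                  - (inner ℝ (Rop (E μ) X V) (Rop (E μ) Y U) : ℝ))) := by
  intro X Y U V
  have hexp : ∀ μ ν : Fin m,
      starAct (wedge (E μ) (E ν)) (starAct (Rop (E μ) (E ν)) R) X Y U V
        = R (Rop (E μ) (E ν) (wedge (E μ) (E ν) X)) Y U V
          + (R X (Rop (E μ) (E ν) (wedge (E μ) (E ν) Y)) U V
          + (R X Y (Rop (E μ) (E ν) (wedge (E μ) (E ν) U)) V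
          + (R X Y U (Rop (E μ) (E ν) (wedge (E μ) (E ν) V))
          + (R (wedge (E μ) (E ν) X) (Rop (E μ) (E ν) Y) U V
          + (R (Rop (E μ) (E ν) X) (wedge (E μ) (E ν) Y) U V
          + (R X Y (wedge (E μ) (E ν) U) (Rop (E μ) (E ν) V)
          + (R X Y (Rop (E μ) (E ν) U) (wedge (E μ) (E ν) V)
          + (R (wedge (E μ) (E ν) X) Y (Rop (E μ) (E ν) U) V
          + (R (Rop (E μ) (E ν) X) Y (wedge (E μ) (E ν) U) V
          + (R X (wedge (E μ) (E ν) Y) U (Rop (E μ) (E ν) V)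
          + (R X (Rop (E μ) (E ν) Y) U (wedge (E μ) (E ν) V)
          + (R (wedge (E μ) (E ν) X) Y U (Rop (E μ) (E ν) V)
          + (R (Rop (E μ) (E ν) X) Y U (wedge (E μ) (E ν) V)
          + (R X (wedge (E μ) (E ν) Y) (Rop (E μ) (E ν) U) V
          + R X (Rop (E μ) (E ν) Y) (wedge (E μ) (E ν) U) V)))))))))))))) := by
    intro μ ν
    simp only [starAct]
    ring
  have hip : (∑ μ : Fin m,
        ((inner ℝ (Rop (E μ) X U) (Rop (E μ) Y V) : ℝ)
          - (inner ℝ (Rop (E μ) X V) (Rop (E μ) Y U) : ℝ)))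
      = (∑ μ : Fin m, ∑ ν : Fin m, R (E μ) X U (E ν) * R (E μ) Y V (E ν))
        - (∑ μ : Fin m, ∑ ν : Fin m, R (E μ) X V (E ν) * R (E μ) Y U (E ν)) := by
    rw [Finset.sum_sub_distrib]
    congr 1
    · exact Finset.sum_congr rfl fun μ _ => qrr_inner_rop E R Rop hRop (E μ) X U (E μ) Y V
    · exact Finset.sum_congr rfl fun μ _ => qrr_inner_rop E R Rop hRop (E μ) X V (E μ) Y U
  simp only [qRR]
  simp only [hexp, Finset.sum_add_distrib]
  rw [hip]
  linarith [qrr_D1 E R Rop hR hRop RicE hRicE X Y U V,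
    qrr_D2 E R Rop hR hRop RicE hRicE X Y U V,
    qrr_D3 E R Rop hR hRop RicE hRicE X Y U V,
    qrr_D4 E R Rop hR hRop RicE hRicE X Y U V,
    qrr_c12pair E R Rop hR hRop X Y U V,
    qrr_c34pair E R Rop hR hRop X Y U V,
    qrr_c13 E R Rop hR hRop X Y U V,
    qrr_c31 E R Rop hR hRop X Y U V,
    qrr_c24 E R Rop hR hRop X Y U V,
    qrr_c42 E R Rop hR hRop X Y U V,
    qrr_c14 E R Rop hR hRop X Y U V,
    qrr_c23 E R Rop hR hRop X Y U V,
    qrr_c41 E R Rop hR hRop X Y U V,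
    qrr_c32 E R Rop hR hRop X Y U V]
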